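/- In a binary-conflict-free net, any two finite firing sequences σ and σ' have extensions that are swapping-equivalent: there exist finite words μ, μ' such that σμ and σ'μ' are firing sequences and σμ ≡₀* σ'μ'. (Confluence of firing up to swapping.) -/

import Mathlib

open Relation

/-- A place/transition net with place type `S` and transition type `T`. -/
structure Net (S T : Type) where
  /-- arc weight from place `s` to transition `t` -/
  pre : T → S → ℕ
  /-- arc weight from transition `t` to place `s` -/
  post : T → S → ℕ
  /-- the initial marking -/
  M0 : S → ℕ
  pre_finite : ∀ t, {s | pre t s > 0}.Finite
  pre_nonempty : ∀ t, ∃ s, pre t s > 0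
  post_finite : ∀ t, {s | post t s > 0}.Finite

namespace Net

variable {S T : Type} (N : Net S T)

/-- the singleton step `{t}` is enabled at marking `M` -/
def Enabled (t : T) (M : S → ℕ) : Prop := ∀ s, N.pre t s ≤ M s

/-- the two-element multiset step `{t,u}` is enabled at marking `M` -/
def Enabled2 (t u : T) (M : S → ℕ) : Prop := ∀ s, N.pre t s + N.pre u s ≤ M s

/-- firing transition `t` leads from marking `M` to marking `M'` -/
def Fires (t : T) (M M' : S → ℕ) : Prop :=
  N.Enabled t M ∧ M' = fun s => M s - N.pre t s + N.post t s

/-- firing the finite transition sequence `σ` leads from `M` to `M'` -/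
inductive FiresList : (S → ℕ) → List T → (S → ℕ) → Prop
  | nil (M : S → ℕ) : FiresList M [] M
  | cons {M M₁ M' : S → ℕ} {t : T} {σ : List T} :
      N.Fires t M M₁ → FiresList M₁ σ M' → FiresList M (t :: σ) M'

/-- a marking is reachable -/
def Reachable (M : S → ℕ) : Prop := ∃ σ : List T, N.FiresList N.M0 σ M

/-- `σ` is a finite firing sequence of `N` -/
def FS (σ : List T) : Prop := ∃ M, N.FiresList N.M0 σ M

/-- `σ` is a (possibly infinite) firing sequence of `N` -/
def FSInf (σ : Stream'.Seq T) : Prop := ∀ n, N.FS (σ.take n)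

/-- adjacency `≡₀` on finite firing sequences -/
def Adj (σ ρ : List T) : Prop :=
  ∃ (α β : List T) (t u : T) (M : S → ℕ),
    σ = α ++ t :: u :: β ∧ ρ = α ++ u :: t :: β ∧
    N.FiresList N.M0 α M ∧ N.Enabled2 t u M ∧ N.FS σ ∧ N.FS ρ

/-- adjacency `≡₀` on possibly infinite firing sequences -/
def AdjSeq (σ ρ : Stream'.Seq T) : Prop :=
  ∃ (α : List T) (β : Stream'.Seq T) (t u : T) (M : S → ℕ),
    σ = (Stream'.Seq.ofList (α ++ [t, u])).append β ∧
    ρ = (Stream'.Seq.ofList (α ++ [u, t])).append β ∧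
    N.FiresList N.M0 α M ∧ N.Enabled2 t u M ∧ N.FSInf σ ∧ N.FSInf ρ

end Net

/-- the finite sequence `l` is a prefix of the possibly infinite sequence `s` -/
def ListPrefixSeq {T : Type} (l : List T) (s : Stream'.Seq T) : Prop :=
  s.take l.length = l

namespace Net

variable {S T : Type} (N : Net S T)

/-- the preorder `⊑₀^∞` on possibly infinite firing sequences -/
def Sqsubseteq0 (σ ρ : Stream'.Seq T) : Prop :=
  ∀ σ'' : List T, N.FS σ'' → ListPrefixSeq σ'' σ →
    ∃ σ' ρ' : List T, N.FS σ' ∧ N.FS ρ' ∧ σ'' <+: σ' ∧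
      ReflTransGen N.Adj σ' ρ' ∧ ListPrefixSeq ρ' ρ

end Net

/-- `N` is binary-conflict-free: any two distinct transitions individually
enabled at a reachable marking are enabled together as a step. -/
def Net.BinaryConflictFree {S T : Type} (N : Net S T) : Prop :=
  ∀ M, N.Reachable M → ∀ t u : T, t ≠ u →
    N.Enabled t M → N.Enabled u M → N.Enabled2 t u M


/-!
If `α t` and `α β` are firing sequences of a binary-conflict-free net, then `t` survives
every transition `u ≠ t` of `β`: `{t, u}` is enabled, so `t` stays enabled after `u` and may be
swapped in front of it. Walking `t` forward through `β`, either it meets an occurrence of itself,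
or it is appended to `α β`; in both cases some extension `α β ν` is swapping-equivalent to a
sequence `α t β'`. Induction on the length of `σ'` then closes the diamond one transition
at a time.
-/

namespace Net

variable {S T : Type} {N : Net S T} {t u : T} {M M₁ M₂ : S → ℕ} {α β γ σ ρ : List T}

theorem Fires.unique (h₁ : N.Fires t M M₁) (h₂ : N.Fires t M M₂) : M₁ = M₂ :=
  h₁.2.trans h₂.2.symm

theorem FiresList.unique (h₁ : N.FiresList M σ M₁) (h₂ : N.FiresList M σ M₂) : M₁ = M₂ := by
  induction h₁ generalizing M₂ with
  | nil => cases h₂; rfl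
  | cons hf _ ih =>
    obtain _ | ⟨hf', hl'⟩ := h₂
    obtain rfl := hf.unique hf'
    exact ih hl'

theorem firesList_append :
    N.FiresList M (σ ++ γ) M₂ ↔ ∃ M₁, N.FiresList M σ M₁ ∧ N.FiresList M₁ γ M₂ := by
  induction σ generalizing M with
  | nil => exact ⟨fun h => ⟨M, .nil M, h⟩, fun ⟨_, h₁, h₂⟩ => by cases h₁; exact h₂⟩
  | cons t σ ih =>
    constructor
    · rintro (_ | ⟨hf, hl⟩)
      obtain ⟨M₁, h₁, h₂⟩ := ih.1 hl
      exact ⟨M₁, .cons hf h₁, h₂⟩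
    · rintro ⟨M₁, _ | ⟨hf, hl⟩, h₂⟩
      exact .cons hf (ih.2 ⟨M₁, hl, h₂⟩)

theorem FS.of_append (h : N.FS (σ ++ γ)) : N.FS σ := by
  obtain ⟨M, hM⟩ := h
  obtain ⟨M₁, hσ, -⟩ := firesList_append.1 hM
  exact ⟨M₁, hσ⟩

theorem Enabled2.symm (h : N.Enabled2 t u M) : N.Enabled2 u t M :=
  fun s => (Nat.add_comm _ _).le.trans (h s)

theorem Enabled2.enabled_of_fires (h : N.Enabled2 t u M) (hu : N.Fires u M M₁) :
    N.Enabled t M₁ := by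
  obtain ⟨-, rfl⟩ := hu
  intro s
  have := h s
  simp only
  omega

theorem Enabled2.firesList_swap (h : N.Enabled2 t u M)
    (hσ : N.FiresList M (t :: u :: σ) M₂) : N.FiresList M (u :: t :: σ) M₂ := by
  obtain _ | ⟨⟨-, rfl⟩, _ | ⟨⟨-, rfl⟩, hσ⟩⟩ := hσ
  have hu : N.Fires u M _ := ⟨fun s => (Nat.le_add_left _ _).trans (h s), rfl⟩
  refine .cons hu (.cons ⟨h.enabled_of_fires hu, rfl⟩ ?_)
  convert hσ using 1
  funext s
  simp only
  have := h s
  omega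

theorem FiresList.swap (hα : N.FiresList M α M₁) (h : N.Enabled2 t u M₁)
    (hσ : N.FiresList M (α ++ t :: u :: σ) M₂) : N.FiresList M (α ++ u :: t :: σ) M₂ := by
  obtain ⟨_, hα', hrest⟩ := firesList_append.1 hσ
  obtain rfl := hα.unique hα'
  exact firesList_append.2 ⟨_, hα, h.firesList_swap hrest⟩

theorem adj_of_enabled2 (hα : N.FiresList N.M0 α M) (h : N.Enabled2 t u M)
    (hσ : N.FS (α ++ t :: u :: β)) : N.Adj (α ++ t :: u :: β) (α ++ u :: t :: β) := by
  obtain ⟨M₂, hM₂⟩ := hσ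
  exact ⟨α, β, t, u, M, rfl, rfl, hα, h, ⟨M₂, hM₂⟩, ⟨M₂, hα.swap h hM₂⟩⟩

theorem Adj.symm (h : N.Adj σ ρ) : N.Adj ρ σ := by
  obtain ⟨α, β, t, u, M, hσ, hρ, hα, htu, hfσ, hfρ⟩ := h
  exact ⟨α, β, u, t, M, hρ, hσ, hα, htu.symm, hfρ, hfσ⟩

theorem Adj.append_right (h : N.Adj σ ρ) (hσ : N.FS (σ ++ γ)) : N.Adj (σ ++ γ) (ρ ++ γ) := by
  obtain ⟨α, β, t, u, M, rfl, rfl, hα, htu, -, -⟩ := h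
  simpa using adj_of_enabled2 (β := β ++ γ) hα htu (by simpa using hσ)

theorem reflTransGen_adj_symm (h : ReflTransGen N.Adj σ ρ) : ReflTransGen N.Adj ρ σ := by
  induction h with
  | refl => exact .refl
  | tail _ hadj ih => exact .head hadj.symm ih

theorem FS.of_reflTransGen_adj (h : ReflTransGen N.Adj σ ρ) (hσ : N.FS σ) : N.FS ρ := by
  induction h with
  | refl => exact hσ
  | tail _ hadj =>
    obtain ⟨-, -, -, -, -, -, -, -, -, -, hρ⟩ := hadj
    exact hρ

theorem reflTransGen_adj_append_right (h : ReflTransGen N.Adj σ ρ) (hσ : N.FS (σ ++ γ)) :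
    ReflTransGen N.Adj (σ ++ γ) (ρ ++ γ) := by
  induction h with
  | refl => exact .refl
  | tail _ hadj ih => exact ih.tail (hadj.append_right (FS.of_reflTransGen_adj ih hσ))

theorem BinaryConflictFree.exists_extend_equiv_cons (hN : N.BinaryConflictFree)
    (ht : N.FS (α ++ [t])) (hβ : N.FS (α ++ β)) :
    ∃ ν β', N.FS (α ++ β ++ ν) ∧ ReflTransGen N.Adj (α ++ β ++ ν) (α ++ t :: β') := by
  induction β generalizing α with
  | nil => exact ⟨[t], [], by simpa using ht, by simpa using ReflTransGen.refl⟩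
  | cons u β ih =>
    by_cases htu : t = u
    · subst htu
      exact ⟨[], β, by simpa using hβ, by simpa using ReflTransGen.refl⟩
    obtain ⟨M₂, hM₂⟩ := hβ
    obtain ⟨M, hα, _ | ⟨hu, hβ⟩⟩ := firesList_append.1 hM₂
    obtain ⟨Mt, hMt⟩ := ht
    obtain ⟨M', hα', _ | ⟨ht, -⟩⟩ := firesList_append.1 hMt
    obtain rfl := hα.unique hα'
    have hut : N.Enabled2 u t M := hN M ⟨α, hα⟩ u t (Ne.symm htu) hu.1 ht.1
    have hαu : N.FiresList N.M0 (α ++ [u]) _ := firesList_append.2 ⟨M, hα, .cons hu (.nil _)⟩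
    have hαut : N.FS (α ++ [u] ++ [t]) :=
      ⟨_, firesList_append.2 ⟨_, hαu, .cons ⟨hut.symm.enabled_of_fires hu, rfl⟩ (.nil _)⟩⟩
    obtain ⟨ν, β', hν, hequiv⟩ := ih hαut ⟨M₂, firesList_append.2 ⟨_, hαu, hβ⟩⟩
    have hadj := adj_of_enabled2 (β := β') hα hut
      (by simpa using FS.of_reflTransGen_adj hequiv hν)
    exact ⟨ν, u :: β', by simpa using hν, by simpa using hequiv.tail (by simpa using hadj)⟩

end Net

theorem closing_diamond {S T : Type} (N : Net S T)
    (hN : N.BinaryConflictFree) (σ σ' : List T)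
    (hσ : N.FS σ) (hσ' : N.FS σ') :
    ∃ μ μ' : List T, N.FS (σ ++ μ) ∧ N.FS (σ' ++ μ') ∧
      Relation.ReflTransGen N.Adj (σ ++ μ) (σ' ++ μ') := by
  induction σ' using List.reverseRecOn with
  | nil => exact ⟨[], σ, by simpa using hσ, by simpa using hσ, by simpa using .refl⟩
  | append_singleton ρ t ih =>
    obtain ⟨μ, μ', -, hρμ', hequiv⟩ := ih hσ'.of_append
    obtain ⟨ν, β', hν, hequiv'⟩ := hN.exists_extend_equiv_cons hσ' hρμ'
    have hσμν : Relation.ReflTransGen N.Adj (σ ++ μ ++ ν) (ρ ++ μ' ++ ν) :=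
      Net.reflTransGen_adj_symm
        (Net.reflTransGen_adj_append_right (Net.reflTransGen_adj_symm hequiv) hν)
    refine ⟨μ ++ ν, β', ?_, ?_, ?_⟩
    · simpa using Net.FS.of_reflTransGen_adj (Net.reflTransGen_adj_symm hσμν) hν
    · simpa using Net.FS.of_reflTransGen_adj hequiv' hν
    · simpa using hσμν.trans hequiv'
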